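/- Proposition A.5: For every closed convex polyhedral cone C in X and every (x,λ) ∈ X × X* with λ(x) > 0, ψ_C(x,λ) = 0. Consequently, for every conic function f = Σᵢ nᵢ ξ_{C_i} (a finite ℤ-linear combination of characteristic functions of closed convex polyhedral cones Cᵢ with integer coefficients nᵢ), Σᵢ nᵢ ψ_{C_i}(x,λ) = 0 whenever λ(x) > 0. -/

import Mathlib

open Pointwise
open scoped Classical

namespace GKM

variable {V : Type*} [AddCommGroup V] [Module ℝ V]

/-- The dual cone `C* = {λ | λ ≥ 0 on C}` of a subset `C` of `V`. -/
def dualCone (C : Set V) : Set (Module.Dual ℝ V) := {l | ∀ x ∈ C, 0 ≤ l x}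

/-- `C` is a closed convex polyhedral cone: the set of nonnegative linear
combinations of a finite subset of `V`. -/
def IsPolyhedralCone (C : Set V) : Prop :=
  ∃ S : Finset V, C = {x | ∃ c : V → ℝ, (∀ v, 0 ≤ c v) ∧ x = ∑ v ∈ S, c v • v}

/-- `F` is a (closed) face of the cone `C`. -/
def IsFaceOf (F C : Set V) : Prop := ∃ l ∈ dualCone C, F = C ∩ {x | l x = 0}

/-- The dimension of (the linear span of) a subset of `V`. -/
noncomputable def sdim (F : Set V) : ℕ := Module.finrank ℝ (Submodule.span ℝ F)

/-- `ℤ`-valued characteristic function `ξ_S`. -/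
noncomputable def ind {α : Type*} (S : Set α) (a : α) : ℤ := if a ∈ S then 1 else 0

/-- `ψ_C(x,λ) = Σ_{F face of C} (−1)^{dim F} ξ_{(F^⊥)*}(x) · ξ_{F*}(λ)`,
where `(F^⊥)* = C + span F` and `F*` is the dual cone of `F`. -/
noncomputable def psi (C : Set V) (x : V) (l : Module.Dual ℝ V) : ℤ :=
  ∑ᶠ F ∈ {F : Set V | IsFaceOf F C},
    (-1 : ℤ) ^ sdim F * ind (C + (Submodule.span ℝ F : Set V)) x * ind (dualCone F) l

/-- `x` is regular for the hyperplane arrangement `{ker α | α ∈ S}`. -/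
def IsRegular (S : Set (Module.Dual ℝ V)) (x : V) : Prop := ∀ α ∈ S, α x ≠ 0

/-- `C` is a chamber of the arrangement `{ker α | α ∈ S}`: a connected component of
the set of regular points, equivalently (for a finite arrangement, which is the case
throughout) a nonempty maximal subset on which each `α ∈ S` has constant sign. -/
def IsChamber (S : Set (Module.Dual ℝ V)) (C : Set V) : Prop :=
  ∃ x, IsRegular S x ∧ C = {y | ∀ α ∈ S, 0 < α x * α y}

/-- The closure of a chamber, described combinatorially (for a chamber of a finite
hyperplane arrangement this coincides with the topological closure). -/
def chClosure (S : Set (Module.Dual ℝ V)) (C : Set V) : Set V :=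
  {y | ∀ α ∈ S, ∀ x ∈ C, 0 ≤ α x * α y}

/-- The hyperplane `ker α` separates `C₁` and `C₂`. -/
def Separates (α : Module.Dual ℝ V) (C₁ C₂ : Set V) : Prop :=
  ∀ x₁ ∈ C₁, ∀ x₂ ∈ C₂, α x₁ * α x₂ < 0

/-- `l(C₁,C₂)`: the number of hyperplanes of the arrangement separating `C₁`,`C₂`. -/
noncomputable def sep (S : Set (Module.Dual ℝ V)) (C₁ C₂ : Set V) : ℕ :=
  {H : Set V | ∃ α ∈ S, H = {x | α x = 0} ∧ Separates α C₁ C₂}.ncard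

/-- `ε(C₁,C₂) = (−1)^{l(C₁,C₂)}`. -/
noncomputable def eps (S : Set (Module.Dual ℝ V)) (C₁ C₂ : Set V) : ℤ :=
  (-1) ^ sep S C₁ C₂

/-- `ψ_R(C₀,x,λ) = Σ_C ε(C₀,C) ψ_{C̄}(x,λ)`, the sum over all chambers `C`. -/
noncomputable def psiR (S : Set (Module.Dual ℝ V)) (C₀ : Set V) (x : V)
    (l : Module.Dual ℝ V) : ℤ :=
  ∑ᶠ C ∈ {C : Set V | IsChamber S C}, eps S C₀ C * psi (chClosure S C) x l

/-- `λ ∈ X*` is `R`-regular: it vanishes on no nonzero element of a 1-dimensional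
face of the closure of a chamber in `X`. -/
def RRegular (S : Set (Module.Dual ℝ V)) (l : Module.Dual ℝ V) : Prop :=
  ∀ C : Set V, IsChamber S C → ∀ F : Set V, IsFaceOf F (chClosure S C) →
    sdim F = 1 → ∀ ω ∈ F, ω ≠ (0 : V) → l ω ≠ 0

/-- `ω` is a nonzero element of a 1-dimensional face of the closure of `C₀`. -/
def InOneDimFaceOfClosure (S : Set (Module.Dual ℝ V)) (C₀ : Set V) (ω : V) : Prop :=
  ω ≠ 0 ∧ ∃ F : Set V, IsFaceOf F (chClosure S C₀) ∧ sdim F = 1 ∧ ω ∈ F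

/-- `(X, X*, R, R∨)` is a (reduced, crystallographic) root system, `R ⊂ X*`
spanning `X*`, with coroot `α∨ = coroot α ∈ X` for each `α ∈ R`. -/
structure IsRootSystem (R : Set (Module.Dual ℝ V)) (coroot : Module.Dual ℝ V → V) : Prop where
  finite : R.Finite
  ne_zero : ∀ α ∈ R, α ≠ 0
  span_top : Submodule.span ℝ R = ⊤
  root_coroot_two : ∀ α ∈ R, α (coroot α) = 2
  pairing_int : ∀ α ∈ R, ∀ β ∈ R, ∃ n : ℤ, β (coroot α) = (n : ℝ)
  reflect_root_mem : ∀ α ∈ R, ∀ β ∈ R, β - β (coroot α) • α ∈ R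
  reflect_coroot : ∀ α ∈ R, ∀ β ∈ R,
    coroot (β - β (coroot α) • α) = coroot β - α (coroot β) • coroot α
  reduced : ∀ α ∈ R, ∀ c : ℝ, c • α ∈ R → c = 1 ∨ c = -1

/-- The Weyl group `W(R)`, the subgroup of `GL(X)` generated by the reflections
`s_α : x ↦ x − α(x)·α∨`, `α ∈ R`. -/
def weylGroup (R : Set (Module.Dual ℝ V)) (coroot : Module.Dual ℝ V → V) :
    Subgroup (V ≃ₗ[ℝ] V) :=
  Subgroup.closure {w : V ≃ₗ[ℝ] V | ∃ α ∈ R, ∀ x, w x = x - α x • coroot α}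

/-- The set `R⁺` of roots positive on the chamber `C`. -/
def posRoots (R : Set (Module.Dual ℝ V)) (C : Set V) : Set (Module.Dual ℝ V) :=
  {α ∈ R | ∀ x ∈ C, 0 < α x}

/-- The root system `R_ω = {α ∈ R | α(ω) = 0}` viewed on the quotient `X/ℝω`:
the set of functionals on `X/ℝω` whose pullback to `X` lies in `R`
(such a pullback automatically kills `ω`, hence lies in `R_ω`). -/
def quotRoots (R : Set (Module.Dual ℝ V)) (ω : V) :
    Set (Module.Dual ℝ (V ⧸ Submodule.span ℝ ({ω} : Set V))) :=
  {β | β.comp (Submodule.span ℝ ({ω} : Set V)).mkQ ∈ R}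

/-- The root system `R_α` (roots `β` with `α(β∨) = 0`) restricted to the
hyperplane `Y = ker α`. -/
def subRoots (R : Set (Module.Dual ℝ V)) (coroot : Module.Dual ℝ V → V)
    (α : Module.Dual ℝ V) : Set (Module.Dual ℝ ↥(LinearMap.ker α)) :=
  {m | ∃ β ∈ R, α (coroot β) = 0 ∧ m = β.comp (LinearMap.ker α).subtype}

/-!
Write `C = cone T` and fix `λ` with `λ(x) > 0`. Group the faces `F` of `C` with `λ ≥ 0` on `F`
according to `G = F ∩ ker λ`. Each group satisfies a local Euler relation: the sum of
`(-1)^{dim F}` over it is `(-1)^{dim G}` if `λ ≤ 0` on `C`, and `0` otherwise. This is proved by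
induction on `dim C - dim G`, sweeping `λ` to `λ - c ν` for a generic `ν` that vanishes on `G` and
is positive on the other generators. As `c` grows from `0`, `λ - c ν` stays nonnegative on a face
`F ≠ G` of the group until it vanishes on a face `ρ ⊆ F` of dimension `dim G + 1`; the faces
attached to `ρ` form the group of `(λ - c ν, ρ)`, and by induction exactly one `ρ` contributes
(the one reached at the largest `c`), with sign `(-1)^{dim G + 1}`.

By Farkas' lemma, the faces `F` with `x ∉ C + span F` and `λ ≥ 0` on `F` are exactly the faces
of `cone (T ∪ {-x})` on which `λ ≥ 0`. Hence `ψ_C(x, λ)` is the difference of the sums of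
`(-1)^{dim F}` over the faces with `λ ≥ 0` of the two cones, and the local Euler relation gives the
same value for both, since `λ(-x) < 0`.
-/

open Filter Topology

lemma dual_sub_smul_apply (l ν : Module.Dual ℝ V) (c : ℝ) (x : V) :
    (l - c • ν) x = l x - c * ν x := rfl

/-! ### Finitely generated cones -/

def coneOf (T : Finset V) : Set V :=
  {x | ∃ c : V → ℝ, (∀ v, 0 ≤ c v) ∧ x = ∑ v ∈ T, c v • v}

lemma mem_coneOf_self {T : Finset V} {v : V} (hv : v ∈ T) : v ∈ coneOf T := by
  refine ⟨fun u => if u = v then 1 else 0, fun u => by positivity, ?_⟩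
  rw [Finset.sum_eq_single_of_mem v hv fun u _ hu => by simp [hu]]
  simp

lemma coneOf_mono {S T : Finset V} (h : S ⊆ T) : coneOf S ⊆ coneOf T := by
  rintro x ⟨c, hc, rfl⟩
  refine ⟨fun v => if v ∈ S then c v else 0,
    fun v => by by_cases hv : v ∈ S <;> simp [hv, hc v], ?_⟩
  rw [← Finset.sum_subset h fun v _ hv => by simp [hv]]
  exact Finset.sum_congr rfl fun v hv => by simp [hv]

lemma coneOf_subset_submodule {T : Finset V} {U : Submodule ℝ V} (h : ∀ v ∈ T, v ∈ U) :
    coneOf T ⊆ U := by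
  rintro x ⟨c, -, rfl⟩
  exact U.sum_smul_mem _ h

lemma nonneg_of_mem_coneOf {T : Finset V} {l : Module.Dual ℝ V} (h : ∀ v ∈ T, 0 ≤ l v)
    {x : V} (hx : x ∈ coneOf T) : 0 ≤ l x := by
  obtain ⟨c, hc, rfl⟩ := hx
  simpa using Finset.sum_nonneg fun v hv => mul_nonneg (hc v) (h v hv)

lemma eq_zero_of_mem_coneOf {T : Finset V} {l : Module.Dual ℝ V} (h : ∀ v ∈ T, l v = 0)
    {x : V} (hx : x ∈ coneOf T) : l x = 0 :=
  coneOf_subset_submodule (U := LinearMap.ker l) h hx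

lemma mem_dualCone_coneOf {T : Finset V} {l : Module.Dual ℝ V} :
    l ∈ dualCone (coneOf T) ↔ ∀ v ∈ T, 0 ≤ l v :=
  ⟨fun h v hv => h v (mem_coneOf_self hv), fun h _ hx => nonneg_of_mem_coneOf h hx⟩

lemma coneOf_inter_ker {T : Finset V} {l : Module.Dual ℝ V} (h : ∀ v ∈ T, 0 ≤ l v) :
    coneOf T ∩ {x | l x = 0} = coneOf (T.filter fun v => l v = 0) := by
  ext x
  refine ⟨?_, fun hx => ⟨coneOf_mono (Finset.filter_subset _ _) hx,
    eq_zero_of_mem_coneOf (fun v hv => (Finset.mem_filter.1 hv).2) hx⟩⟩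
  rintro ⟨⟨c, hc, rfl⟩, hx0⟩
  replace hx0 : ∑ v ∈ T, c v * l v = 0 := by simpa using hx0
  have hterm := (Finset.sum_eq_zero_iff_of_nonneg fun v hv => mul_nonneg (hc v) (h v hv)).1 hx0
  refine ⟨c, hc, ?_⟩
  rw [Finset.sum_filter]
  refine Finset.sum_congr rfl fun v hv => ?_
  split_ifs with hlv
  · rfl
  · simp [(mul_eq_zero.1 (hterm v hv)).resolve_right hlv]

lemma mem_coneOf_add_submodule_iff {T : Finset V} {U : Submodule ℝ V} {y : V} :
    y ∈ coneOf T + (U : Set V) ↔ ∃ c : V → ℝ, (∀ v, 0 ≤ c v) ∧ y - ∑ v ∈ T, c v • v ∈ U := by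
  constructor
  · rintro ⟨_, ⟨c, hc, rfl⟩, u, hu, rfl⟩
    exact ⟨c, hc, by simpa using hu⟩
  · rintro ⟨c, hc, hu⟩
    exact ⟨_, ⟨c, hc, rfl⟩, _, hu, add_sub_cancel _ _⟩

/-- Farkas' lemma, relative to a subspace `U`. -/
lemma exists_dual_of_forall_sub_notMem {ι : Type*} (s : Finset ι) (U : Submodule ℝ V)
    (g : ι → V) (y : V) (hy : ∀ c : ι → ℝ, (∀ i, 0 ≤ c i) → y - ∑ i ∈ s, c i • g i ∉ U) :
    ∃ l : Module.Dual ℝ V, (∀ i ∈ s, 0 ≤ l (g i)) ∧ (∀ x ∈ U, l x = 0) ∧ l y < 0 := by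
  induction s using Finset.induction generalizing g y with
  | empty =>
    obtain ⟨l, hlU, hly⟩ := LinearMap.exists_extend_of_notMem (0 : U →ₗ[ℝ] ℝ)
      (by simpa using hy 0 (fun _ => le_rfl)) (-1)
    exact ⟨l, by simp, fun x hx => by simpa using congr($hlU ⟨x, hx⟩), by simp [hly]⟩
  | @insert j s hj ih =>
    have sum_update : ∀ (c : ι → ℝ) (t : ℝ) (g : ι → V),
        ∑ i ∈ insert j s, Function.update c j t i • g i = t • g j + ∑ i ∈ s, c i • g i := by
      intro c t g
      rw [Finset.sum_insert hj, Function.update_self]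
      exact congrArg _ (Finset.sum_congr rfl fun i hi => by
        rw [Function.update_of_ne (ne_of_mem_of_not_mem hi hj)])
    have update_nonneg : ∀ (c : ι → ℝ) (t : ℝ), (∀ i, 0 ≤ c i) → 0 ≤ t →
        ∀ i, 0 ≤ Function.update c j t i := fun c t hc ht i => by
      by_cases hi : i = j <;> simp [hi, hc i, ht]
    obtain ⟨l₀, hl₀s, hl₀U, hl₀y⟩ := ih g y fun c hc => by
      simpa [sum_update] using hy _ (update_nonneg c 0 hc le_rfl)
    by_cases hw : 0 ≤ l₀ (g j)
    · exact ⟨l₀, (Finset.forall_mem_insert _ _ _).2 ⟨hw, hl₀s⟩, hl₀U, hl₀y⟩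
    push Not at hw
    -- project along `g j` onto `ker l₀`, and apply the induction hypothesis there
    let π : V →ₗ[ℝ] V := LinearMap.id - (l₀ (g j))⁻¹ • l₀.smulRight (g j)
    have hπ : ∀ v, π v = v - (l₀ v / l₀ (g j)) • g j := fun v => by
      simp [π, div_eq_inv_mul, mul_smul]
    obtain ⟨m, hms, hmU, hmy⟩ := ih (π ∘ g) (π y) fun d hd hmem => by
      set z := y - ∑ i ∈ s, d i • g i
      have hz : l₀ z ≤ 0 := by
        have : 0 ≤ ∑ i ∈ s, d i * l₀ (g i) :=
          Finset.sum_nonneg fun i hi => mul_nonneg (hd i) (hl₀s i hi)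
        simp only [z, map_sub, map_sum, map_smul, smul_eq_mul]
        linarith
      have hπz : π y - ∑ i ∈ s, d i • (π ∘ g) i = π z := by simp [z]
      refine hy (Function.update d j (l₀ z / l₀ (g j)))
        (update_nonneg d _ hd (div_nonneg_of_nonpos hz hw.le)) ?_
      rw [hπz, hπ] at hmem
      convert hmem using 1
      rw [sum_update, sub_add_eq_sub_sub_swap]
    refine ⟨m.comp π, (Finset.forall_mem_insert _ _ _).2 ⟨?_, hms⟩, fun x hx => ?_, hmy⟩
    · simp [hπ, hw.ne]
    · simp [hπ, hl₀U x hx, hmU x hx]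

lemma exists_dual_of_notMem_coneOf_add {T : Finset V} {U : Submodule ℝ V} {y : V}
    (hy : y ∉ coneOf T + (U : Set V)) :
    ∃ l : Module.Dual ℝ V, (∀ v ∈ T, 0 ≤ l v) ∧ (∀ x ∈ U, l x = 0) ∧ l y < 0 :=
  exists_dual_of_forall_sub_notMem T U id y fun c hc h =>
    hy (mem_coneOf_add_submodule_iff.2 ⟨c, hc, h⟩)

lemma eventually_pos_add_mul {ι : Type*} (s : Finset ι) {a : ι → ℝ} (b : ι → ℝ)
    (ha : ∀ i ∈ s, 0 < a i) :
    ∀ᶠ ε in 𝓝[>] (0 : ℝ), 0 < ε ∧ ∀ i ∈ s, 0 < a i + ε * b i := by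
  refine (eventually_mem_nhdsWithin (s := Set.Ioi 0)).and
    (((Filter.eventually_all_finset s).2 fun i hi => ?_).filter_mono nhdsWithin_le_nhds)
  have : Tendsto (fun ε : ℝ => a i + ε * b i) (𝓝 0) (𝓝 (a i)) := by
    simpa using ((continuous_mul_const (b i)).const_add (a i)).tendsto 0
  exact this.eventually_const_lt (ha i hi)

lemma exists_dual_pos_and_ne_zero (U : Submodule ℝ V) {l₀ : Module.Dual ℝ V}
    (hl₀ : ∀ x ∈ U, l₀ x = 0) {P : Finset V} (hP : ∀ v ∈ P, 0 < l₀ v) {W : Finset V}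
    (hW : ∀ w ∈ W, w ∉ U) :
    ∃ ν : Module.Dual ℝ V, (∀ x ∈ U, ν x = 0) ∧ (∀ v ∈ P, 0 < ν v) ∧ ∀ w ∈ W, ν w ≠ 0 := by
  obtain ⟨θ, hθ⟩ := Module.exists_dual_forall_apply_ne_zero (K := ℝ) (fun w : W => U.mkQ w)
    fun w => by simpa [Submodule.Quotient.mk_eq_zero] using hW w w.2
  -- `l₀ + ε θ` works for all small `ε > 0` but finitely many
  have hcof : 𝓝[>] (0 : ℝ) ≤ cofinite :=
    (nhdsWithin_mono 0 fun ε (hε : 0 < ε) => hε.ne').trans (nhdsNE_le_cofinite 0)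
  have hne : ∀ᶠ ε in 𝓝[>] (0 : ℝ), ∀ w ∈ W, l₀ w + ε * θ (U.mkQ w) ≠ 0 :=
    (Filter.eventually_all_finset W).2 fun w hw =>
      ((eventually_cofinite_ne (-l₀ w / θ (U.mkQ w))).filter_mono hcof).mono fun ε hε h =>
        hε (by
          have := hθ ⟨w, hw⟩
          field_simp
          linarith)
  obtain ⟨ε, ⟨-, hpos⟩, hne⟩ :=
    ((eventually_pos_add_mul P (fun v => θ (U.mkQ v)) hP).and hne).exists
  refine ⟨l₀ + ε • θ.comp U.mkQ, fun x hx => ?_, fun v hv => by simpa using hpos v hv,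
    fun w hw => by simpa using hne w hw⟩
  simp [hl₀ x hx, (Submodule.Quotient.mk_eq_zero U).2 hx]

/-! ### Faces of a finitely generated cone -/

lemma IsFaceOf.subset {F C : Set V} (h : IsFaceOf F C) : F ⊆ C := by
  obtain ⟨l, -, rfl⟩ := h
  exact Set.inter_subset_left

lemma isFaceOf_coneOf_iff {T : Finset V} {F : Set V} :
    IsFaceOf F (coneOf T) ↔
      ∃ l : Module.Dual ℝ V, (∀ v ∈ T, 0 ≤ l v) ∧ F = coneOf (T.filter fun v => l v = 0) := by
  constructor
  · rintro ⟨l, hl, rfl⟩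
    rw [mem_dualCone_coneOf] at hl
    exact ⟨l, hl, coneOf_inter_ker hl⟩
  · rintro ⟨l, hl, rfl⟩
    exact ⟨l, mem_dualCone_coneOf.2 hl, (coneOf_inter_ker hl).symm⟩

noncomputable def faceFinset (T : Finset V) : Finset (Set V) :=
  (T.powerset.image coneOf).filter fun F => IsFaceOf F (coneOf T)

lemma mem_faceFinset {T : Finset V} {F : Set V} :
    F ∈ faceFinset T ↔ IsFaceOf F (coneOf T) := by
  refine ⟨fun h => (Finset.mem_filter.1 h).2, fun h => Finset.mem_filter.2 ⟨?_, h⟩⟩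
  obtain ⟨l, -, rfl⟩ := isFaceOf_coneOf_iff.1 h
  exact Finset.mem_image.2 ⟨_, Finset.mem_powerset.2 (Finset.filter_subset _ _), rfl⟩

namespace IsFaceOf

variable {T : Finset V} {F G : Set V}

lemma eq_coneOf_filter (h : IsFaceOf F (coneOf T)) : F = coneOf (T.filter (· ∈ F)) := by
  obtain ⟨l, hl, hF⟩ := isFaceOf_coneOf_iff.1 h
  have hgen : ∀ v ∈ T, v ∈ F ↔ l v = 0 := fun v hv => by
    rw [hF]
    exact ⟨eq_zero_of_mem_coneOf (fun u hu => (Finset.mem_filter.1 hu).2),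
      fun h0 => mem_coneOf_self (Finset.mem_filter.2 ⟨hv, h0⟩)⟩
  rwa [Finset.filter_congr hgen]

lemma span_le (hF : IsFaceOf F (coneOf T)) {U : Submodule ℝ V} (h : ∀ v ∈ T, v ∈ F → v ∈ U) :
    Submodule.span ℝ F ≤ U := by
  rw [Submodule.span_le, hF.eq_coneOf_filter]
  exact coneOf_subset_submodule fun v hv => (Finset.mem_filter.1 hv).elim (h v)

lemma eq_zero_of_forall_mem (hF : IsFaceOf F (coneOf T)) {l : Module.Dual ℝ V}
    (h : ∀ v ∈ T, v ∈ F → l v = 0) : ∀ x ∈ Submodule.span ℝ F, l x = 0 :=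
  fun _ hx => hF.span_le (U := LinearMap.ker l) h hx

lemma nonneg_of_forall_mem (hF : IsFaceOf F (coneOf T)) {l : Module.Dual ℝ V}
    (h : ∀ v ∈ T, v ∈ F → 0 ≤ l v) : ∀ x ∈ F, 0 ≤ l x := fun x hx => by
  rw [hF.eq_coneOf_filter] at hx
  exact nonneg_of_mem_coneOf (fun v hv => (Finset.mem_filter.1 hv).elim (h v)) hx

lemma subset_of_forall_mem (hF : IsFaceOf F (coneOf T)) (hG : IsFaceOf G (coneOf T))
    (h : ∀ v ∈ T, v ∈ F → v ∈ G) : F ⊆ G := by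
  rw [hF.eq_coneOf_filter, hG.eq_coneOf_filter]
  exact coneOf_mono fun v hv =>
    Finset.mem_filter.2 ⟨(Finset.mem_filter.1 hv).1, (Finset.mem_filter.1 hv).elim (h v)⟩

lemma exists_mem_notMem_of_not_subset (hF : IsFaceOf F (coneOf T))
    (hG : IsFaceOf G (coneOf T)) (h : ¬ F ⊆ G) : ∃ v ∈ T, v ∈ F ∧ v ∉ G := by
  by_contra! hT
  exact h (hF.subset_of_forall_mem hG hT)

lemma inter_span (hF : IsFaceOf F (coneOf T)) : coneOf T ∩ Submodule.span ℝ F = F := by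
  obtain ⟨l, hl, rfl⟩ := hF
  refine Set.Subset.antisymm (fun x ⟨hxC, hx⟩ => ⟨hxC, ?_⟩)
    fun x hx => ⟨hx.1, Submodule.subset_span hx⟩
  exact (Submodule.span_le (p := LinearMap.ker l)).2 (fun y hy => hy.2) hx

lemma notMem_span (hF : IsFaceOf F (coneOf T)) {v : V} (hv : v ∈ T) (hvF : v ∉ F) :
    v ∉ Submodule.span ℝ F := fun h => hvF (hF.inter_span ▸ ⟨mem_coneOf_self hv, h⟩)

lemma inter_ker (hF : IsFaceOf F (coneOf T)) {m : Module.Dual ℝ V} (hm : ∀ x ∈ F, 0 ≤ m x) :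
    IsFaceOf (F ∩ {x | m x = 0}) (coneOf T) := by
  obtain ⟨l, hl, hFl⟩ := isFaceOf_coneOf_iff.1 hF
  have hmT : ∀ v ∈ T, l v = 0 → 0 ≤ m v := fun v hv h0 =>
    hm v (hFl ▸ mem_coneOf_self (Finset.mem_filter.2 ⟨hv, h0⟩))
  -- tilt `l` towards `m`, little enough to keep the generators off `F` strictly positive
  obtain ⟨ε, hε, hpos⟩ := (eventually_pos_add_mul (T.filter fun v => l v ≠ 0) (fun v => m v)
    fun v hv => (hl v (Finset.mem_filter.1 hv).1).lt_of_ne' (Finset.mem_filter.1 hv).2).exists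
  have hpos' : ∀ v ∈ T, l v ≠ 0 → 0 < l v + ε * m v := fun v hv h => hpos v (by simp [hv, h])
  refine isFaceOf_coneOf_iff.2 ⟨l + ε • m, fun v hv => ?_, ?_⟩
  · by_cases h : l v = 0
    · simpa [h] using mul_nonneg hε.le (hmT v hv h)
    · simpa using (hpos' v hv h).le
  rw [hFl, coneOf_inter_ker fun v hv => (Finset.mem_filter.1 hv).elim (hmT v),
    Finset.filter_filter]
  refine congrArg coneOf (Finset.filter_congr fun v hv => ?_)
  by_cases h : l v = 0
  · simp [h, hε.ne']
  · simpa [h] using (hpos' v hv h).ne'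

lemma sdim_le [FiniteDimensional ℝ V] (hF : IsFaceOf F (coneOf T)) :
    sdim F ≤ sdim (coneOf T) :=
  Submodule.finrank_mono (Submodule.span_mono hF.subset)

lemma eq_of_subset_of_sdim_le [FiniteDimensional ℝ V] (hF : IsFaceOf F (coneOf T))
    (hG : IsFaceOf G (coneOf T)) (hFG : F ⊆ G) (hdim : sdim G ≤ sdim F) : F = G := by
  rw [← hF.inter_span, ← hG.inter_span,
    Submodule.eq_of_le_of_finrank_le (Submodule.span_mono hFG) hdim]

end IsFaceOf

lemma span_sup_span_singleton_le {G F : Set V} {u : V} (hGF : G ⊆ F) (hu : u ∈ F) :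
    Submodule.span ℝ G ⊔ Submodule.span ℝ {u} ≤ Submodule.span ℝ F :=
  sup_le (Submodule.span_mono hGF)
    ((Submodule.span_singleton_le_iff_mem _ _).2 (Submodule.subset_span hu))

lemma span_eq_sup_of_sdim_eq_succ [FiniteDimensional ℝ V] {G F : Set V} {u : V} (hGF : G ⊆ F)
    (hu : u ∈ F) (huG : u ∉ Submodule.span ℝ G) (hdim : sdim F = sdim G + 1) :
    Submodule.span ℝ F = Submodule.span ℝ G ⊔ Submodule.span ℝ {u} := by
  refine (Submodule.eq_of_le_of_finrank_le (span_sup_span_singleton_le hGF hu) ?_).symm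
  rw [Submodule.finrank_sup_span_singleton huG]
  exact hdim.le

lemma sdim_eq_succ_of_span_le_sup [FiniteDimensional ℝ V] {G F : Set V} {u : V} (hGF : G ⊆ F)
    (hu : u ∈ F) (huG : u ∉ Submodule.span ℝ G)
    (hle : Submodule.span ℝ F ≤ Submodule.span ℝ G ⊔ Submodule.span ℝ {u}) :
    sdim F = sdim G + 1 := by
  rw [sdim, le_antisymm hle (span_sup_span_singleton_le hGF hu),
    Submodule.finrank_sup_span_singleton huG, sdim]

lemma mem_sup_span_singleton_of_smul_sub_mem {U : Submodule ℝ V} {u v : V} {a b : ℝ}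
    (ha : a ≠ 0) (h : a • v - b • u ∈ U) : v ∈ U ⊔ Submodule.span ℝ {u} := by
  have hv : v = a⁻¹ • ((a • v - b • u) + b • u) := by simp [smul_smul, ha]
  rw [hv]
  exact Submodule.smul_mem _ _
    (Submodule.add_mem_sup h (Submodule.smul_mem _ _ (Submodule.mem_span_singleton_self u)))

lemma isFaceOf_coneOf_insert_neg_iff {T : Finset V} {x : V} {F : Set V} :
    IsFaceOf F (coneOf (insert (-x) T)) ∧ -x ∉ F ↔
      IsFaceOf F (coneOf T) ∧ x ∉ coneOf T + (Submodule.span ℝ F : Set V) := by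
  constructor
  · rintro ⟨hF, hxF⟩
    obtain ⟨l, hl, hFl⟩ := isFaceOf_coneOf_iff.1 hF
    rw [Finset.forall_mem_insert] at hl
    have hlx : 0 < l (-x) := hl.1.lt_of_ne fun h => hxF
      (hFl ▸ mem_coneOf_self (Finset.mem_filter.2 ⟨Finset.mem_insert_self _ _, h.symm⟩))
    have hFT : IsFaceOf F (coneOf T) := isFaceOf_coneOf_iff.2
      ⟨l, hl.2, by rwa [Finset.filter_insert, if_neg hlx.ne'] at hFl⟩
    refine ⟨hFT, ?_⟩
    rintro ⟨a, ha, b, hb, hab⟩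
    have hla : 0 ≤ l a := nonneg_of_mem_coneOf hl.2 ha
    have hlb : l b = 0 := hFT.eq_zero_of_forall_mem (fun v _ hvF => by
      rw [hFl] at hvF
      exact eq_zero_of_mem_coneOf (fun u hu => (Finset.mem_filter.1 hu).2) hvF) b hb
    rw [map_neg, ← hab, map_add] at hlx
    linarith
  · rintro ⟨hF, hx⟩
    obtain ⟨l₀, hl₀, hFl₀⟩ := isFaceOf_coneOf_iff.1 hF
    obtain ⟨l₁, hl₁T, hl₁F, hl₁x⟩ := exists_dual_of_notMem_coneOf_add hx
    -- `l₀ + δ l₁` still cuts out `F` from `cone T`, and is positive on `-x` for `δ` large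
    set δ := (|l₀ x| + 1) / -l₁ x
    have hδ : 0 < δ := div_pos (by positivity) (neg_pos.2 hl₁x)
    have hδx : δ * l₁ x = -(|l₀ x| + 1) := by
      simp only [δ]
      field_simp [hl₁x.ne]
    have hlx : 0 < (l₀ + δ • l₁) (-x) := by
      simp only [map_neg, LinearMap.add_apply, LinearMap.smul_apply, smul_eq_mul, hδx]
      linarith [le_abs_self (l₀ x)]
    have hfilter : (insert (-x) T).filter (fun v => (l₀ + δ • l₁) v = 0) =
        T.filter fun v => l₀ v = 0 := by
      rw [Finset.filter_insert, if_neg hlx.ne']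
      refine Finset.filter_congr fun v hv => ?_
      have h₁ : 0 ≤ δ * l₁ v := mul_nonneg hδ.le (hl₁T v hv)
      simp only [LinearMap.add_apply, LinearMap.smul_apply, smul_eq_mul]
      refine ⟨fun h => by linarith [hl₀ v hv], fun h => ?_⟩
      have hvF : v ∈ F := hFl₀ ▸ mem_coneOf_self (Finset.mem_filter.2 ⟨hv, h⟩)
      rw [h, hl₁F v (Submodule.subset_span hvF), mul_zero, add_zero]
    refine ⟨isFaceOf_coneOf_iff.2 ⟨l₀ + δ • l₁, (Finset.forall_mem_insert _ _ _).2 ⟨hlx.le,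
      fun v hv => add_nonneg (hl₀ v hv) (mul_nonneg hδ.le (hl₁T v hv))⟩, hfilter ▸ hFl₀⟩, ?_⟩
    intro hxF
    exact hx ⟨0, ⟨0, fun _ => le_rfl, by simp⟩, x, by
      simpa using (Submodule.span ℝ F).neg_mem (Submodule.subset_span hxF), zero_add x⟩

/-! ### The local Euler relation -/

noncomputable def faceFiber (T : Finset V) (l : Module.Dual ℝ V) (G : Set V) :
    Finset (Set V) :=
  (faceFinset T).filter fun F => (∀ x ∈ F, 0 ≤ l x) ∧ F ∩ {x | l x = 0} = G

noncomputable def fiberSum (T : Finset V) (l : Module.Dual ℝ V) (G : Set V) : ℤ :=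
  ∑ F ∈ faceFiber T l G, (-1 : ℤ) ^ sdim F

section faceFiber

variable {T : Finset V} {l : Module.Dual ℝ V} {F G : Set V}

lemma mem_faceFiber :
    F ∈ faceFiber T l G ↔
      IsFaceOf F (coneOf T) ∧ (∀ x ∈ F, 0 ≤ l x) ∧ F ∩ {x | l x = 0} = G := by
  rw [faceFiber, Finset.mem_filter, mem_faceFinset]

lemma subset_of_mem_faceFiber (hF : F ∈ faceFiber T l G) : G ⊆ F := by
  rw [← (mem_faceFiber.1 hF).2.2]
  exact Set.inter_subset_left

lemma pos_of_mem_faceFiber (hF : F ∈ faceFiber T l G) {v : V} (hvF : v ∈ F) (hvG : v ∉ G) :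
    0 < l v := by
  obtain ⟨-, hl, hFG⟩ := mem_faceFiber.1 hF
  exact (hl v hvF).lt_of_ne fun h => hvG (hFG ▸ ⟨hvF, h.symm⟩)

lemma mem_faceFiber_of_pos (hF : IsFaceOf F (coneOf T)) (hG : IsFaceOf G (coneOf T))
    (hGF : G ⊆ F) (hlG : ∀ x ∈ G, l x = 0) (hpos : ∀ v ∈ T, v ∈ F → v ∉ G → 0 < l v) :
    F ∈ faceFiber T l G := by
  have hl : ∀ x ∈ F, 0 ≤ l x := hF.nonneg_of_forall_mem fun v hv hvF => by
    by_cases hvG : v ∈ G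
    · exact (hlG v hvG).ge
    · exact (hpos v hv hvF hvG).le
  refine mem_faceFiber.2 ⟨hF, hl, Set.Subset.antisymm ?_ fun x hx => ⟨hGF hx, hlG x hx⟩⟩
  refine (hF.inter_ker hl).subset_of_forall_mem hG fun v hv hvF => ?_
  by_contra hvG
  exact (hpos v hv hvF.1 hvG).ne' hvF.2

lemma fiberSum_eq_zero_of_not (h : ¬ (IsFaceOf G (coneOf T) ∧ ∀ x ∈ G, l x = 0)) :
    fiberSum T l G = 0 := by
  refine Finset.sum_eq_zero fun F hF => absurd ?_ h
  obtain ⟨hFf, hl, rfl⟩ := mem_faceFiber.1 hF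
  exact ⟨hFf.inter_ker hl, fun x hx => hx.2⟩

lemma fiberSum_eq_of_nonpos (hG : IsFaceOf G (coneOf T)) (hlG : ∀ x ∈ G, l x = 0)
    (hT : ∀ v ∈ T, l v ≤ 0) : fiberSum T l G = (-1) ^ sdim G := by
  suffices faceFiber T l G = {G} by rw [fiberSum, this, Finset.sum_singleton]
  refine Finset.eq_singleton_iff_unique_mem.2 ⟨mem_faceFiber_of_pos hG hG subset_rfl hlG
    fun v _ hvG hvG' => absurd hvG hvG', fun F hF => ?_⟩
  obtain ⟨hFf, hl, rfl⟩ := mem_faceFiber.1 hF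
  refine (Set.inter_eq_left.2 fun x hx => le_antisymm ?_ (hl x hx)).symm
  simpa using nonneg_of_mem_coneOf (l := -l) (by simpa using hT) (hFf.subset hx)

end faceFiber

structure IsSweepDirection (T : Finset V) (l : Module.Dual ℝ V) (G : Set V)
    (ν : Module.Dual ℝ V) : Prop where
  isFaceOf : IsFaceOf G (coneOf T)
  apply_eq_zero : ∀ x ∈ G, l x = 0
  eq_zero_of_mem_span : ∀ x ∈ Submodule.span ℝ G, ν x = 0
  pos : ∀ v ∈ T, v ∉ G → 0 < ν v
  generic : ∀ u ∈ T, ∀ v ∈ T, l u * ν v = l v * ν u → l u • v - l v • u ∈ Submodule.span ℝ G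

lemma exists_isSweepDirection {T : Finset V} {l : Module.Dual ℝ V} {G : Set V}
    (hG : IsFaceOf G (coneOf T)) (hlG : ∀ x ∈ G, l x = 0) :
    ∃ ν, IsSweepDirection T l G ν := by
  obtain ⟨l₀, hl₀, hGl₀⟩ := isFaceOf_coneOf_iff.1 hG
  have hl₀G : ∀ x ∈ Submodule.span ℝ G, l₀ x = 0 := hG.eq_zero_of_forall_mem fun v _ hvG =>
    eq_zero_of_mem_coneOf (fun u hu => (Finset.mem_filter.1 hu).2) (hGl₀ ▸ hvG)
  have hl₀pos : ∀ v ∈ T.filter (· ∉ G), 0 < l₀ v := fun v hv => by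
    obtain ⟨hv, hvG⟩ := Finset.mem_filter.1 hv
    exact (hl₀ v hv).lt_of_ne' fun h => hvG (hGl₀ ▸ mem_coneOf_self (Finset.mem_filter.2 ⟨hv, h⟩))
  obtain ⟨ν, hνG, hνpos, hνW⟩ := exists_dual_pos_and_ne_zero (Submodule.span ℝ G) hl₀G hl₀pos
    (W := ((T ×ˢ T).image fun p => l p.1 • p.2 - l p.2 • p.1).filter (· ∉ Submodule.span ℝ G))
    fun w hw => (Finset.mem_filter.1 hw).2
  refine ⟨ν, hG, hlG, hνG, fun v hv hvG => hνpos v (Finset.mem_filter.2 ⟨hv, hvG⟩),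
    fun u hu v hv huv => ?_⟩
  by_contra hspan
  refine hνW _ (Finset.mem_filter.2 ⟨Finset.mem_image.2 ⟨(u, v), by simp [hu, hv], rfl⟩, hspan⟩) ?_
  simp [huv]

/-- The largest `c` with `l - c • ν ≥ 0` on the generators of `F` outside `G`
(junk value `0` if there are none). -/
noncomputable def sweepRatio (T : Finset V) (G : Set V) (l ν : Module.Dual ℝ V) (F : Set V) :
    ℝ :=
  if h : (T.filter fun v => v ∈ F ∧ v ∉ G).Nonempty then
    (T.filter fun v => v ∈ F ∧ v ∉ G).inf' h fun v => l v / ν v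
  else 0

noncomputable def sweepFace (T : Finset V) (G : Set V) (l ν : Module.Dual ℝ V) (F : Set V) :
    Set V :=
  F ∩ {x | (l - sweepRatio T G l ν F • ν) x = 0}

noncomputable def coveringFaces (T : Finset V) (l : Module.Dual ℝ V) (G : Set V) :
    Finset (Set V) :=
  (faceFiber T l G).filter fun ρ => sdim ρ = sdim G + 1

namespace IsSweepDirection

variable {T : Finset V} {l ν : Module.Dual ℝ V} {G F ρ : Set V}

lemma sub_smul_apply_eq_zero (hν : IsSweepDirection T l G ν) (c : ℝ) {x : V} (hx : x ∈ G) :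
    (l - c • ν) x = 0 := by
  simp [hν.apply_eq_zero x hx, hν.eq_zero_of_mem_span x (Submodule.subset_span hx)]

lemma sweepRatio_spec (hν : IsSweepDirection T l G ν) {u : V} (hu : u ∈ T) (huF : u ∈ F)
    (huG : u ∉ G) :
    (∃ u₁ ∈ T, u₁ ∈ F ∧ u₁ ∉ G ∧ l u₁ = sweepRatio T G l ν F * ν u₁) ∧
      ∀ v ∈ T, v ∈ F → v ∉ G → sweepRatio T G l ν F * ν v ≤ l v := by
  have hne : (T.filter fun v => v ∈ F ∧ v ∉ G).Nonempty := ⟨u, by simp [hu, huF, huG]⟩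
  rw [sweepRatio, dif_pos hne]
  obtain ⟨u₁, hu₁, heq⟩ := Finset.exists_mem_eq_inf' hne fun v => l v / ν v
  simp only [Finset.mem_filter] at hu₁
  refine ⟨⟨u₁, hu₁.1, hu₁.2.1, hu₁.2.2, ?_⟩, fun v hv hvF hvG => ?_⟩
  · rw [heq, div_mul_cancel₀ _ (hν.pos u₁ hu₁.1 hu₁.2.2).ne']
  · rw [← le_div_iff₀ (hν.pos v hv hvG)]
    exact Finset.inf'_le _ (by simp [hv, hvF, hvG])

lemma sweepRatio_eq (hν : IsSweepDirection T l G ν) {c : ℝ}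
    (hle : ∀ v ∈ T, v ∈ F → v ∉ G → c * ν v ≤ l v) {u : V} (hu : u ∈ T) (huF : u ∈ F)
    (huG : u ∉ G) (hlu : l u = c * ν u) : sweepRatio T G l ν F = c := by
  obtain ⟨⟨u₁, hu₁, hu₁F, hu₁G, hlu₁⟩, hmin⟩ := hν.sweepRatio_spec hu huF huG
  refine le_antisymm ?_ ?_
  · exact le_of_mul_le_mul_right (hlu ▸ hmin u hu huF huG) (hν.pos u hu huG)
  · exact le_of_mul_le_mul_right (hlu₁ ▸ hle u₁ hu₁ hu₁F hu₁G) (hν.pos u₁ hu₁ hu₁G)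

lemma sdim_eq_succ [FiniteDimensional ℝ V] (hν : IsSweepDirection T l G ν)
    (hρ : IsFaceOf ρ (coneOf T)) (hGρ : G ⊆ ρ) {u : V} (hu : u ∈ T) (huρ : u ∈ ρ) (huG : u ∉ G)
    (hlu : 0 < l u) (hprop : ∀ v ∈ T, v ∈ ρ → v ∉ G → l u * ν v = l v * ν u) :
    sdim ρ = sdim G + 1 := by
  refine sdim_eq_succ_of_span_le_sup hGρ huρ (hν.isFaceOf.notMem_span hu huG)
    (hρ.span_le fun v hv hvρ => ?_)
  by_cases hvG : v ∈ G
  · exact Submodule.mem_sup_left (Submodule.subset_span hvG)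
  · exact mem_sup_span_singleton_of_smul_sub_mem hlu.ne'
      (hν.generic u hu v hv (hprop v hv hvρ hvG))

lemma mul_eq_mul_of_sdim_eq_succ [FiniteDimensional ℝ V] (hν : IsSweepDirection T l G ν)
    (hGρ : G ⊆ ρ) (hdim : sdim ρ = sdim G + 1) {u v : V} (hu : u ∈ T) (huρ : u ∈ ρ)
    (huG : u ∉ G) (hvρ : v ∈ ρ) : l u * ν v = l v * ν u := by
  have hv : v ∈ Submodule.span ℝ G ⊔ Submodule.span ℝ {u} := by
    rw [← span_eq_sup_of_sdim_eq_succ hGρ huρ (hν.isFaceOf.notMem_span hu huG) hdim]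
    exact Submodule.subset_span hvρ
  obtain ⟨g, hg, _, hz, rfl⟩ := Submodule.mem_sup.1 hv
  obtain ⟨t, rfl⟩ := Submodule.mem_span_singleton.1 hz
  have hlg : l g = 0 := hν.isFaceOf.eq_zero_of_forall_mem
    (fun w _ hw => hν.apply_eq_zero w hw) g hg
  simp only [map_add, map_smul, smul_eq_mul, hlg, hν.eq_zero_of_mem_span g hg]
  ring

lemma sub_sweepRatio_nonneg (hν : IsSweepDirection T l G ν) (hF : F ∈ faceFiber T l G) :
    ∀ x ∈ F, 0 ≤ (l - sweepRatio T G l ν F • ν) x := by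
  refine (mem_faceFiber.1 hF).1.nonneg_of_forall_mem fun v hv hvF => ?_
  by_cases hvG : v ∈ G
  · exact (hν.sub_smul_apply_eq_zero _ hvG).ge
  · rw [dual_sub_smul_apply, sub_nonneg]
    exact (hν.sweepRatio_spec hv hvF hvG).2 v hv hvF hvG

lemma sweepFace_mem_coveringFaces [FiniteDimensional ℝ V] (hν : IsSweepDirection T l G ν)
    (hF : F ∈ faceFiber T l G) (hFG : F ≠ G) : sweepFace T G l ν F ∈ coveringFaces T l G := by
  have hGF := subset_of_mem_faceFiber hF
  obtain ⟨u, hu, huF, huG⟩ := (mem_faceFiber.1 hF).1.exists_mem_notMem_of_not_subset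
    hν.isFaceOf fun h => hFG (h.antisymm hGF)
  obtain ⟨⟨u₁, hu₁, hu₁F, hu₁G, hlu₁⟩, -⟩ := hν.sweepRatio_spec hu huF huG
  have hρ := (mem_faceFiber.1 hF).1.inter_ker (hν.sub_sweepRatio_nonneg hF)
  have hGρ : G ⊆ sweepFace T G l ν F := fun x hx => ⟨hGF hx, hν.sub_smul_apply_eq_zero _ hx⟩
  refine Finset.mem_filter.2 ⟨mem_faceFiber_of_pos hρ hν.isFaceOf hGρ hν.apply_eq_zero
    fun v _ hvρ hvG => pos_of_mem_faceFiber hF hvρ.1 hvG, ?_⟩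
  refine hν.sdim_eq_succ hρ hGρ hu₁ ⟨hu₁F, by simp [hlu₁]⟩ hu₁G
    (pos_of_mem_faceFiber hF hu₁F hu₁G) fun v _ hvρ _ => ?_
  have hlv : l v = sweepRatio T G l ν F * ν v := by simpa [sub_eq_zero] using hvρ.2
  rw [hlv, hlu₁]
  ring

lemma sweepRatio_eq_div [FiniteDimensional ℝ V] (hν : IsSweepDirection T l G ν)
    (hρ : ρ ∈ coveringFaces T l G) {u : V} (hu : u ∈ T) (huρ : u ∈ ρ) (huG : u ∉ G) :
    sweepRatio T G l ν ρ = l u / ν u := by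
  obtain ⟨hρ, hdim⟩ := Finset.mem_filter.1 hρ
  have hνu := (hν.pos u hu huG).ne'
  refine hν.sweepRatio_eq (fun v hv hvρ hvG => ?_) hu huρ huG (div_mul_cancel₀ _ hνu).symm
  rw [div_mul_eq_mul_div, hν.mul_eq_mul_of_sdim_eq_succ (subset_of_mem_faceFiber hρ) hdim hu huρ
    huG hvρ, mul_div_cancel_right₀ _ hνu]

lemma exists_mem_of_mem_coveringFaces [FiniteDimensional ℝ V] (hν : IsSweepDirection T l G ν)
    (hρ : ρ ∈ coveringFaces T l G) :
    ∃ u ∈ T, u ∈ ρ ∧ u ∉ G ∧ 0 < l u ∧ l u = sweepRatio T G l ν ρ * ν u := by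
  obtain ⟨hρ', hdim⟩ := Finset.mem_filter.1 hρ
  obtain ⟨u, hu, huρ, huG⟩ := (mem_faceFiber.1 hρ').1.exists_mem_notMem_of_not_subset
    hν.isFaceOf fun h => by
      rw [h.antisymm (subset_of_mem_faceFiber hρ')] at hdim
      omega
  refine ⟨u, hu, huρ, huG, pos_of_mem_faceFiber hρ' huρ huG, ?_⟩
  rw [hν.sweepRatio_eq_div hρ hu huρ huG, div_mul_cancel₀ _ (hν.pos u hu huG).ne']

lemma sub_sweepRatio_eq_zero [FiniteDimensional ℝ V] (hν : IsSweepDirection T l G ν)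
    (hρ : ρ ∈ coveringFaces T l G) : ∀ x ∈ ρ, (l - sweepRatio T G l ν ρ • ν) x = 0 := by
  intro x hx
  refine (mem_faceFiber.1 (Finset.mem_filter.1 hρ).1).1.eq_zero_of_forall_mem
    (fun v hv hvρ => ?_) x (Submodule.subset_span hx)
  by_cases hvG : v ∈ G
  · exact hν.sub_smul_apply_eq_zero _ hvG
  · rw [dual_sub_smul_apply, hν.sweepRatio_eq_div hρ hv hvρ hvG,
      div_mul_cancel₀ _ (hν.pos v hv hvG).ne', sub_self]

lemma filter_sweepFace_eq [FiniteDimensional ℝ V] (hν : IsSweepDirection T l G ν)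
    (hρ : ρ ∈ coveringFaces T l G) :
    ((faceFiber T l G).erase G).filter (fun F => sweepFace T G l ν F = ρ) =
      faceFiber T (l - sweepRatio T G l ν ρ • ν) ρ := by
  obtain ⟨u, hu, huρ, huG, hlu, hlu'⟩ := hν.exists_mem_of_mem_coveringFaces hρ
  have hc : 0 < sweepRatio T G l ν ρ := by
    rw [hν.sweepRatio_eq_div hρ hu huρ huG]
    exact div_pos hlu (hν.pos u hu huG)
  obtain ⟨hρ', hdim⟩ := Finset.mem_filter.1 hρ
  have hGρ := subset_of_mem_faceFiber hρ'
  ext F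
  simp only [Finset.mem_filter, Finset.mem_erase]
  constructor
  · rintro ⟨⟨hFG, hF⟩, rfl⟩
    -- the sweep of `F` stops at `sweepFace F`, whose own sweep ratio is therefore that of `F`
    obtain ⟨v, hv, hvF, hvG⟩ := (mem_faceFiber.1 hF).1.exists_mem_notMem_of_not_subset
      hν.isFaceOf fun h => hFG (h.antisymm (subset_of_mem_faceFiber hF))
    obtain ⟨⟨u₁, hu₁, hu₁F, hu₁G, hlu₁⟩, -⟩ := hν.sweepRatio_spec hv hvF hvG
    have hratio : sweepRatio T G l ν (sweepFace T G l ν F) = sweepRatio T G l ν F := by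
      rw [hν.sweepRatio_eq_div hρ hu₁ ⟨hu₁F, by simp [hlu₁]⟩ hu₁G, hlu₁,
        mul_div_cancel_right₀ _ (hν.pos u₁ hu₁ hu₁G).ne']
    rw [hratio]
    exact mem_faceFiber.2 ⟨(mem_faceFiber.1 hF).1, hν.sub_sweepRatio_nonneg hF, rfl⟩
  · intro hF
    obtain ⟨hFf, hμ, hFρ⟩ := mem_faceFiber.1 hF
    have hρF : ρ ⊆ F := hFρ ▸ Set.inter_subset_left
    have hle : ∀ v ∈ T, v ∈ F → v ∉ G → sweepRatio T G l ν ρ * ν v ≤ l v :=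
      fun v _ hvF _ => by simpa [sub_nonneg] using hμ v hvF
    have hFG : F ≠ G := by
      rintro rfl
      rw [hρF.antisymm hGρ] at hdim
      omega
    refine ⟨⟨hFG, mem_faceFiber_of_pos hFf hν.isFaceOf (hGρ.trans hρF) hν.apply_eq_zero
      fun v hv hvF hvG => (mul_pos hc (hν.pos v hv hvG)).trans_le (hle v hv hvF hvG)⟩, ?_⟩
    rw [sweepFace, hν.sweepRatio_eq hle hu (hρF huρ) huG hlu', hFρ]

lemma coneOf_inter_ker_mem_coveringFaces [FiniteDimensional ℝ V]
    (hν : IsSweepDirection T l G ν) {c : ℝ} (hc : ∀ v ∈ T, (l - c • ν) v ≤ 0) {u : V}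
    (hu : u ∈ T) (huG : u ∉ G) (hlu : 0 < l u) (hlu' : l u = c * ν u) :
    coneOf T ∩ {x | (l - c • ν) x = 0} ∈ coveringFaces T l G ∧
      sweepRatio T G l ν (coneOf T ∩ {x | (l - c • ν) x = 0}) = c := by
  set K := coneOf T ∩ {x | (l - c • ν) x = 0}
  have hker : ∀ {v}, v ∈ K → l v = c * ν v := fun hv => by simpa [sub_eq_zero] using hv.2
  have hK : IsFaceOf K (coneOf T) := by
    refine ⟨-(l - c • ν), mem_dualCone_coneOf.2 fun v hv => by simpa using hc v hv, ?_⟩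
    simp only [K, LinearMap.neg_apply, neg_eq_zero]
  have huK : u ∈ K := ⟨mem_coneOf_self hu, by simp [hlu']⟩
  have hGK : G ⊆ K := fun x hx => ⟨hν.isFaceOf.subset hx, hν.sub_smul_apply_eq_zero c hx⟩
  have hc₀ : 0 < c := pos_of_mul_pos_left (hlu' ▸ hlu) (hν.pos u hu huG).le
  refine ⟨Finset.mem_filter.2 ⟨mem_faceFiber_of_pos hK hν.isFaceOf hGK hν.apply_eq_zero
    fun v hv hvK hvG => hker hvK ▸ mul_pos hc₀ (hν.pos v hv hvG),
    hν.sdim_eq_succ hK hGK hu huK huG hlu fun v _ hvK _ => ?_⟩,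
    hν.sweepRatio_eq (fun v _ hvK _ => (hker hvK).ge) hu huK huG hlu'⟩
  rw [hker hvK, hlu']
  ring

lemma card_filter_coveringFaces [FiniteDimensional ℝ V] (hν : IsSweepDirection T l G ν)
    {w : V} (hw : w ∈ T) (hlw : 0 < l w) :
    ((coveringFaces T l G).filter fun ρ => ∀ v ∈ T, (l - sweepRatio T G l ν ρ • ν) v ≤ 0).card
      = 1 := by
  -- the sweep ends at the largest ratio `l u / ν u`
  obtain ⟨u, hu, hmax⟩ := Finset.exists_max_image (T.filter fun v => 0 < l v)
    (fun v => l v / ν v) ⟨w, Finset.mem_filter.2 ⟨hw, hlw⟩⟩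
  simp only [Finset.mem_filter, and_imp] at hu hmax
  have huG : u ∉ G := fun h => hu.2.ne' (hν.apply_eq_zero u h)
  have hνu := hν.pos u hu.1 huG
  have hc : ∀ v ∈ T, (l - (l u / ν u) • ν) v ≤ 0 := by
    intro v hv
    by_cases hvG : v ∈ G
    · exact (hν.sub_smul_apply_eq_zero _ hvG).le
    rw [dual_sub_smul_apply, sub_nonpos]
    rcases le_or_gt (l v) 0 with hlv | hlv
    · exact hlv.trans (mul_nonneg (div_pos hu.2 hνu).le (hν.pos v hv hvG).le)
    · exact (div_le_iff₀ (hν.pos v hv hvG)).1 (hmax v hv hlv)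
  obtain ⟨hK, hKc⟩ := hν.coneOf_inter_ker_mem_coveringFaces hc hu.1 huG hu.2
    (div_mul_cancel₀ _ hνu.ne').symm
  refine Finset.card_eq_one.2 ⟨_, Finset.eq_singleton_iff_unique_mem.2
    ⟨Finset.mem_filter.2 ⟨hK, by rw [hKc]; exact hc⟩, fun ρ hρ => ?_⟩⟩
  obtain ⟨hρ, hρc⟩ := Finset.mem_filter.1 hρ
  obtain ⟨u', hu', hu'ρ, hu'G, hlu', -⟩ := hν.exists_mem_of_mem_coveringFaces hρ
  have hcρ : sweepRatio T G l ν ρ = l u / ν u := by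
    refine le_antisymm (hν.sweepRatio_eq_div hρ hu' hu'ρ hu'G ▸ hmax u' hu' hlu') ?_
    have := hρc u hu.1
    rw [dual_sub_smul_apply, sub_nonpos] at this
    exact (div_le_iff₀ hνu).2 this
  have hρf := (mem_faceFiber.1 (Finset.mem_filter.1 hρ).1).1
  refine hρf.eq_of_subset_of_sdim_le (mem_faceFiber.1 (Finset.mem_filter.1 hK).1).1
    (fun x hx => ⟨hρf.subset hx, hcρ ▸ hν.sub_sweepRatio_eq_zero hρ x hx⟩) ?_
  rw [(Finset.mem_filter.1 hK).2, (Finset.mem_filter.1 hρ).2]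

lemma fiberSum_eq_zero [FiniteDimensional ℝ V] (hν : IsSweepDirection T l G ν) {w : V}
    (hw : w ∈ T) (hlw : 0 < l w)
    (ih : ∀ m ρ, IsFaceOf ρ (coneOf T) → sdim ρ = sdim G + 1 → fiberSum T m ρ =
      if IsFaceOf ρ (coneOf T) ∧ (∀ x ∈ ρ, m x = 0) ∧ ∀ v ∈ T, m v ≤ 0 then (-1) ^ sdim ρ
      else 0) :
    fiberSum T l G = 0 := by
  have hG : G ∈ faceFiber T l G := mem_faceFiber_of_pos hν.isFaceOf hν.isFaceOf subset_rfl
    hν.apply_eq_zero fun _ _ hv h => absurd hv h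
  have hcov : ∀ ρ ∈ coveringFaces T l G,
      ∑ F ∈ ((faceFiber T l G).erase G).filter (sweepFace T G l ν · = ρ), (-1 : ℤ) ^ sdim F =
        if ∀ v ∈ T, (l - sweepRatio T G l ν ρ • ν) v ≤ 0 then (-1) ^ (sdim G + 1) else 0 := by
    intro ρ hρ
    obtain ⟨hρ', hdim⟩ := Finset.mem_filter.1 hρ
    rw [hν.filter_sweepFace_eq hρ, ← fiberSum, ih _ ρ (mem_faceFiber.1 hρ').1 hdim, hdim]
    simp only [(mem_faceFiber.1 hρ').1, true_and, and_iff_right (hν.sub_sweepRatio_eq_zero hρ)]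
  rw [fiberSum, ← Finset.add_sum_erase _ _ hG, ← Finset.sum_fiberwise_of_maps_to fun F hF =>
    hν.sweepFace_mem_coveringFaces (Finset.mem_of_mem_erase hF) (Finset.ne_of_mem_erase hF),
    Finset.sum_congr rfl hcov, ← Finset.sum_filter, Finset.sum_const,
    hν.card_filter_coveringFaces hw hlw, pow_succ]
  simp

end IsSweepDirection

theorem fiberSum_eq [FiniteDimensional ℝ V] (T : Finset V) (l : Module.Dual ℝ V) (G : Set V) :
    fiberSum T l G =
      if IsFaceOf G (coneOf T) ∧ (∀ x ∈ G, l x = 0) ∧ ∀ v ∈ T, l v ≤ 0 then (-1) ^ sdim G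
      else 0 := by
  by_cases hG : IsFaceOf G (coneOf T) ∧ ∀ x ∈ G, l x = 0
  swap
  · rw [fiberSum_eq_zero_of_not hG, if_neg fun h => hG ⟨h.1, h.2.1⟩]
  by_cases hT : ∀ v ∈ T, l v ≤ 0
  · rw [fiberSum_eq_of_nonpos hG.1 hG.2 hT, if_pos ⟨hG.1, hG.2, hT⟩]
  push Not at hT
  obtain ⟨w, hw, hlw⟩ := hT
  obtain ⟨ν, hν⟩ := exists_isSweepDirection hG.1 hG.2
  rw [hν.fiberSum_eq_zero hw hlw fun m ρ _ _ => fiberSum_eq T m ρ,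
    if_neg fun h => (h.2.2 w hw).not_gt hlw]
termination_by sdim (coneOf T) - sdim G
decreasing_by
  have := ‹IsFaceOf ρ (coneOf T)›.sdim_le
  omega

/-! ### Reduction to the local Euler relation -/

noncomputable def posFaceSum (T : Finset V) (l : Module.Dual ℝ V) : ℤ :=
  ∑ F ∈ (faceFinset T).filter (fun F => ∀ x ∈ F, 0 ≤ l x), (-1 : ℤ) ^ sdim F

lemma posFaceSum_eq_finsum (T : Finset V) (l : Module.Dual ℝ V) :
    posFaceSum T l = ∑ᶠ G, fiberSum T l G := by
  rw [finsum_eq_sum_of_support_subset (s := faceFinset T) _ fun G hG => ?_]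
  · rw [posFaceSum, ← Finset.sum_fiberwise_of_maps_to (t := faceFinset T)
      (g := fun F => F ∩ {x | l x = 0}) fun F hF => ?_]
    · exact Finset.sum_congr rfl fun G _ => by rw [fiberSum, faceFiber, Finset.filter_filter]
    · obtain ⟨hF, hl⟩ := Finset.mem_filter.1 hF
      exact mem_faceFinset.2 ((mem_faceFinset.1 hF).inter_ker hl)
  · by_contra hGT
    exact hG (fiberSum_eq_zero_of_not fun h => hGT (mem_faceFinset.2 h.1))

lemma fiberSum_insert_neg [FiniteDimensional ℝ V] {T : Finset V} {l : Module.Dual ℝ V}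
    {x : V} (hx : 0 < l x) (G : Set V) : fiberSum (insert (-x) T) l G = fiberSum T l G := by
  rw [fiberSum_eq, fiberSum_eq]
  by_cases hlG : (∀ y ∈ G, l y = 0) ∧ ∀ v ∈ T, l v ≤ 0
  · have hxG : -x ∉ G := fun h => by simpa [hx.ne'] using hlG.1 _ h
    have hxC : x ∉ coneOf T + (Submodule.span ℝ G : Set V) := by
      rintro ⟨a, ha, b, hb, rfl⟩
      have hla := nonneg_of_mem_coneOf (l := -l) (by simpa using hlG.2) ha
      have hlb : l b = 0 := (Submodule.span_le (p := LinearMap.ker l)).2 hlG.1 hb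
      simp only [map_add, hlb, LinearMap.neg_apply] at hx hla
      linarith
    have hface : IsFaceOf G (coneOf (insert (-x) T)) ↔ IsFaceOf G (coneOf T) :=
      (and_iff_left hxG).symm.trans (isFaceOf_coneOf_insert_neg_iff.trans (and_iff_left hxC))
    have hT : ∀ v ∈ insert (-x) T, l v ≤ 0 :=
      (Finset.forall_mem_insert _ _ _).2 ⟨by simpa using hx.le, hlG.2⟩
    by_cases hG : IsFaceOf G (coneOf T)
    · rw [if_pos ⟨hface.2 hG, hlG.1, hT⟩, if_pos ⟨hG, hlG⟩]
    · rw [if_neg fun h => hG (hface.1 h.1), if_neg fun h => hG h.1]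
  · rw [if_neg fun h => hlG ⟨h.2.1, fun v hv => h.2.2 v (Finset.mem_insert_of_mem hv)⟩,
      if_neg fun h => hlG h.2]

lemma psi_coneOf_eq_sub {T : Finset V} {l : Module.Dual ℝ V} {x : V} (hx : 0 < l x) :
    psi (coneOf T) x l = posFaceSum T l - posFaceSum (insert (-x) T) l := by
  have hfaces : {F | IsFaceOf F (coneOf T)} = ↑(faceFinset T) := by
    ext
    simp [mem_faceFinset]
  have hT' : (faceFinset (insert (-x) T)).filter (fun F => ∀ y ∈ F, 0 ≤ l y) =
      ((faceFinset T).filter fun F => ∀ y ∈ F, 0 ≤ l y).filter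
        fun F => x ∉ coneOf T + (Submodule.span ℝ F : Set V) := by
    ext F
    simp only [Finset.mem_filter, mem_faceFinset]
    refine ⟨fun ⟨hF, hl⟩ => ?_, fun ⟨⟨hF, hl⟩, hxF⟩ => ?_⟩
    · have := isFaceOf_coneOf_insert_neg_iff.1 ⟨hF, fun h => absurd (hl _ h) (by simpa using hx)⟩
      exact ⟨⟨this.1, hl⟩, this.2⟩
    · exact ⟨(isFaceOf_coneOf_insert_neg_iff.2 ⟨hF, hxF⟩).1, hl⟩
  rw [psi, hfaces, finsum_mem_coe_finset, posFaceSum, posFaceSum, hT', Finset.filter_filter,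
    Finset.sum_filter, Finset.sum_filter, ← Finset.sum_sub_distrib]
  refine Finset.sum_congr rfl fun F _ => ?_
  have hdual : l ∈ dualCone F ↔ ∀ y ∈ F, 0 ≤ l y := Iff.rfl
  simp only [ind, hdual]
  split_ifs <;> simp_all

theorem psi_eq_zero_of_isPolyhedralCone [FiniteDimensional ℝ V] {C : Set V}
    (hC : IsPolyhedralCone C) {l : Module.Dual ℝ V} {x : V} (hx : 0 < l x) : psi C x l = 0 := by
  obtain ⟨T, rfl⟩ := hC
  change psi (coneOf T) x l = 0
  rw [psi_coneOf_eq_sub hx, posFaceSum_eq_finsum, posFaceSum_eq_finsum]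
  simp [fiberSum_insert_neg hx]

/-- **Proposition A.5**: `ψ_C(x,λ) = 0` whenever `λ(x) > 0`, and consequently the
same holds for `ψ_f` for every conic function `f = Σᵢ nᵢ ξ_{Cᵢ}`. -/
theorem prop_A_5
    {X : Type*} [AddCommGroup X] [Module ℝ X] [FiniteDimensional ℝ X] :
    (∀ C : Set X, IsPolyhedralCone C →
      ∀ (x : X) (l : Module.Dual ℝ X), 0 < l x → psi C x l = 0) ∧
    (∀ (r : ℕ) (Cs : Fin r → Set X) (ns : Fin r → ℤ),
      (∀ i, IsPolyhedralCone (Cs i)) →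
      ∀ (x : X) (l : Module.Dual ℝ X), 0 < l x →
        ∑ i, ns i * psi (Cs i) x l = 0) :=
  ⟨fun _ hC _ _ hx => psi_eq_zero_of_isPolyhedralCone hC hx, fun _ _ _ hCs _ _ hx =>
    Finset.sum_eq_zero fun i _ => by rw [psi_eq_zero_of_isPolyhedralCone (hCs i) hx, mul_zero]⟩

end GKM
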